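/- arXiv:1808.03613 — 2 statements merged into one kernel-verified Lean document; each statement's English description precedes it below -/
import Mathlib

section
/- Fix an integer q ≥ 2 and integers r, m_D, K ≥ 0 with r + m_D ≥ K. Then P(r + m_D, K) = ∑_{i=max(0, K−r)}^{min(m_D, K)} P_i(m_D, K) · P(r, K − i), as an identity of real numbers. -/
open Finset

/-- `P(m,K) = ∏_{i=0}^{K-1} (1 - q^{i-m})`. -/
noncomputable def Pfr (q m K : ℕ) : ℝ :=
  ∏ i ∈ Finset.range K, (1 - (q : ℝ) ^ ((i : ℤ) - (m : ℤ)))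

/-- The Gaussian binomial coefficient `[K; r]_q`. -/
noncomputable def gaussBinom (q K r : ℕ) : ℝ :=
  ∏ i ∈ Finset.range r, (((q : ℝ) ^ (K - i) - 1) / ((q : ℝ) ^ (r - i) - 1))

/-- `P_r(m,K) = q^{-m(K-r)} · [K; r]_q · ∏_{i=0}^{r-1} (1 - q^{i-m})`. -/
noncomputable def Prk (q m K r : ℕ) : ℝ :=
  (q : ℝ) ^ (-(m : ℤ) * ((K : ℤ) - (r : ℤ))) * gaussBinom q K r *
    ∏ i ∈ Finset.range r, (1 - (q : ℝ) ^ ((i : ℤ) - (m : ℤ)))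

section Aux

variable {q : ℕ}

lemma hQ1 (hq : 2 ≤ q) : (1:ℝ) < (q:ℝ) := by exact_mod_cast lt_of_lt_of_le one_lt_two hq

lemma hQ0 (hq : 2 ≤ q) : (q:ℝ) ≠ 0 := Nat.cast_ne_zero.mpr (by omega)

lemma Pfr_succ (m K : ℕ) : Pfr q m (K+1) = Pfr q m K * (1 - (q:ℝ)^((K:ℤ) - (m:ℤ))) := by
  simp [Pfr, Finset.prod_range_succ]

lemma Pfr_zero_of_lt {m K : ℕ} (h : m < K) : Pfr q m K = 0 := by
  apply Finset.prod_eq_zero (Finset.mem_range.mpr h)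
  simp

lemma gaussBinom_eq (K r : ℕ) : gaussBinom q K r =
    (∏ i ∈ range r, ((q:ℝ)^(K-i) - 1)) / (∏ i ∈ range r, ((q:ℝ)^(r-i) - 1)) := by
  simp [gaussBinom, Finset.prod_div_distrib]

lemma denom_ne_zero (hq : 2 ≤ q) (r : ℕ) :
    (∏ i ∈ range r, ((q:ℝ)^(r-i) - 1)) ≠ 0 := by
  rw [Finset.prod_ne_zero_iff]
  intro i hi
  have h1 : 1 < (q:ℝ)^(r-i) := one_lt_pow₀ (hQ1 hq) (Nat.sub_ne_zero_of_lt (mem_range.mp hi))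
  linarith

lemma gauss_pascal (hq : 2 ≤ q) {K r : ℕ} (h : r ≤ K) :
    gaussBinom q (K+1) (r+1) = (q:ℝ)^(r+1) * gaussBinom q K (r+1) + gaussBinom q K r := by
  have hD1 := denom_ne_zero hq (r+1)
  have hD0 := denom_ne_zero hq r
  have hA : ∏ i ∈ range (r+1), ((q:ℝ)^(K+1-i) - 1)
      = ((q:ℝ)^(K+1) - 1) * ∏ i ∈ range r, ((q:ℝ)^(K-i) - 1) := by
    rw [Finset.prod_range_succ']
    simp [Nat.succ_sub_succ, mul_comm]
  have hB : ∏ i ∈ range (r+1), ((q:ℝ)^(K-i) - 1)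
      = (∏ i ∈ range r, ((q:ℝ)^(K-i) - 1)) * ((q:ℝ)^(K-r) - 1) := Finset.prod_range_succ _ _
  have hDD : ∏ i ∈ range (r+1), ((q:ℝ)^(r+1-i) - 1)
      = ((q:ℝ)^(r+1) - 1) * ∏ i ∈ range r, ((q:ℝ)^(r-i) - 1) := by
    rw [Finset.prod_range_succ']
    simp [Nat.succ_sub_succ, mul_comm]
  have hpow : (q:ℝ)^(r+1) * (q:ℝ)^(K-r) = (q:ℝ)^(K+1) := by
    rw [← pow_add]; congr 1; omega
  rw [gaussBinom_eq, gaussBinom_eq, gaussBinom_eq, hA, hB, hDD]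
  rw [hDD] at hD1
  set C := ∏ i ∈ range r, ((q:ℝ)^(K-i) - 1)
  set D := ∏ i ∈ range r, ((q:ℝ)^(r-i) - 1)
  have hE : ((q:ℝ)^(r+1) - 1) ≠ 0 := by
    have := one_lt_pow₀ (hQ1 hq) (Nat.succ_ne_zero r)
    intro hc; rw [sub_eq_zero] at hc; rw [← hc] at this; exact lt_irrefl _ this
  have hq0 : (q:ℝ) ≠ 0 := hQ0 hq
  have hKr : (q:ℝ)^(K-r) = (q:ℝ)^(K+1) / (q:ℝ)^(r+1) := by
    rw [eq_div_iff (pow_ne_zero _ hq0), mul_comm, hpow]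
  rw [hKr]
  field_simp
  ring

end Aux

section Aux2
variable {q : ℕ}

lemma Pfr_eq (hq : 2 ≤ q) (m K : ℕ) :
    Pfr q m K = ∏ i ∈ range K, (1 - (q:ℝ)^i / (q:ℝ)^m) := by
  apply Finset.prod_congr rfl
  intro i _
  rw [zpow_sub₀ (hQ0 hq), zpow_natCast, zpow_natCast]

lemma Prk_eq (hq : 2 ≤ q) (m K i : ℕ) :
    Prk q m K i = (q:ℝ)^(m*i) / (q:ℝ)^(m*K) * gaussBinom q K i *
      ∏ j ∈ range i, (1 - (q:ℝ)^j / (q:ℝ)^m) := by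
  unfold Prk
  congr 1
  · congr 1
    rw [show (-(m:ℤ) * ((K:ℤ) - (i:ℤ))) = ((m*i:ℕ):ℤ) - ((m*K:ℕ):ℤ) by push_cast; ring,
      zpow_sub₀ (hQ0 hq), zpow_natCast, zpow_natCast]
  · apply Finset.prod_congr rfl
    intro j _
    rw [zpow_sub₀ (hQ0 hq), zpow_natCast, zpow_natCast]

lemma Prk_zero_of_lt {m K i : ℕ} (h : m < i) : Prk q m K i = 0 := by
  have : (∏ j ∈ Finset.range i, (1 - (q : ℝ) ^ ((j : ℤ) - (m : ℤ)))) = 0 :=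
    Finset.prod_eq_zero (Finset.mem_range.mpr h) (by simp)
  simp [Prk, this]

lemma gaussBinom_zero_of_lt {K i : ℕ} (h : K < i) : gaussBinom q K i = 0 :=
  Finset.prod_eq_zero (Finset.mem_range.mpr h) (by simp [Nat.sub_self])

lemma Prk_zero_of_K_lt {m K i : ℕ} (h : K < i) : Prk q m K i = 0 := by
  simp [Prk, gaussBinom_zero_of_lt h]

lemma Prk_zero_succ (hq : 2 ≤ q) (m K : ℕ) :
    Prk q m (K+1) 0 = Prk q m K 0 * (q:ℝ)^((0:ℤ) - (m:ℤ)) := by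
  simp only [Prk, gaussBinom, Finset.range_zero, Finset.prod_empty, mul_one]
  rw [← zpow_add₀ (hQ0 hq)]
  congr 1
  push_cast
  ring

lemma Prk_succ (hq : 2 ≤ q) {m K i : ℕ} (h : i ≤ K) :
    Prk q m (K+1) (i+1) = Prk q m K (i+1) * (q:ℝ)^(((i:ℤ)+1) - (m:ℤ))
      + Prk q m K i * (1 - (q:ℝ)^((i:ℤ) - (m:ℤ))) := by
  have hq0 : (q:ℝ) ≠ 0 := hQ0 hq
  rw [Prk_eq hq, Prk_eq hq, Prk_eq hq, gauss_pascal hq h,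
    show (((i:ℤ)+1) - (m:ℤ)) = ((i+1:ℕ):ℤ) - ((m:ℕ):ℤ) by push_cast; ring,
    show ((i:ℤ) - (m:ℤ)) = ((i:ℕ):ℤ) - ((m:ℕ):ℤ) from rfl,
    zpow_sub₀ hq0, zpow_sub₀ hq0]
  simp only [zpow_natCast]
  rw [Finset.prod_range_succ]
  field_simp
  ring
end Aux2

lemma key_sum {q : ℕ} (hq : 2 ≤ q) (r mD : ℕ) :
    ∀ K, Pfr q (r+mD) K = ∑ i ∈ range (K+1), Prk q mD K i * Pfr q r (K-i) := by
  intro K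
  induction K with
  | zero => simp [Pfr, Prk, gaussBinom]
  | succ K ih =>
    have hq0 : (q:ℝ) ≠ 0 := hQ0 hq
    have expand : ∑ i ∈ range (K+1+1), Prk q mD (K+1) i * Pfr q r (K+1-i)
        = ∑ i ∈ range (K+1), Prk q mD K i * Pfr q r (K-i) * (1 - (q:ℝ)^((K:ℤ) - r - mD)) := by
      rw [Finset.sum_range_succ']
      have h1 : ∀ i ∈ range (K+1), Prk q mD (K+1) (i+1) * Pfr q r (K+1-(i+1))
          = Prk q mD K (i+1) * (q:ℝ)^(((i:ℤ)+1)-(mD:ℤ)) * Pfr q r (K-i)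
            + Prk q mD K i * (1 - (q:ℝ)^((i:ℤ)-(mD:ℤ))) * Pfr q r (K-i) := by
        intro i hi
        have hiK : i ≤ K := Nat.lt_succ_iff.mp (mem_range.mp hi)
        rw [Nat.succ_sub_succ, Prk_succ hq hiK]
        ring
      rw [Finset.sum_congr rfl h1, Finset.sum_add_distrib]
      -- regroup: S1 + G0 = ∑_{j<K+2} h j
      have h2 : (∑ i ∈ range (K+1), Prk q mD K (i+1) * (q:ℝ)^(((i:ℤ)+1)-(mD:ℤ)) * Pfr q r (K-i))
          + Prk q mD (K+1) 0 * Pfr q r (K+1-0)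
          = ∑ j ∈ range (K+1+1), Prk q mD K j * (q:ℝ)^((j:ℤ)-(mD:ℤ)) * Pfr q r (K+1-j) := by
        conv_rhs => rw [Finset.sum_range_succ']
        congr 1
        · apply Finset.sum_congr rfl
          intro i _
          rw [Nat.succ_sub_succ]
          push_cast
          ring
        · rw [Prk_zero_succ hq]
          norm_num
      have h3 : ∑ j ∈ range (K+1+1), Prk q mD K j * (q:ℝ)^((j:ℤ)-(mD:ℤ)) * Pfr q r (K+1-j)
          = ∑ j ∈ range (K+1), Prk q mD K j * (q:ℝ)^((j:ℤ)-(mD:ℤ)) * Pfr q r (K+1-j) := by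
        rw [Finset.sum_range_succ, Prk_zero_of_K_lt (Nat.lt_succ_self K)]
        simp
      have h4 : ∀ j ∈ range (K+1),
          Prk q mD K j * (q:ℝ)^((j:ℤ)-(mD:ℤ)) * Pfr q r (K+1-j)
            + Prk q mD K j * (1 - (q:ℝ)^((j:ℤ)-(mD:ℤ))) * Pfr q r (K-j)
          = Prk q mD K j * Pfr q r (K-j) * (1 - (q:ℝ)^((K:ℤ) - r - mD)) := by
        intro j hj
        have hjK : j ≤ K := Nat.lt_succ_iff.mp (mem_range.mp hj)
        have hsub : K + 1 - j = (K - j) + 1 := by omega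
        rw [hsub, Pfr_succ]
        have hcast : ((K - j : ℕ) : ℤ) = (K:ℤ) - (j:ℤ) := by omega
        rw [hcast]
        have hz : (q:ℝ)^((j:ℤ)-(mD:ℤ)) * (q:ℝ)^(((K:ℤ)-(j:ℤ)) - (r:ℤ))
            = (q:ℝ)^((K:ℤ) - r - mD) := by
          rw [← zpow_add₀ hq0]
          congr 1
          ring
        calc Prk q mD K j * (q:ℝ)^((j:ℤ)-(mD:ℤ))
              * (Pfr q r (K-j) * (1 - (q:ℝ)^(((K:ℤ)-(j:ℤ)) - (r:ℤ))))
            + Prk q mD K j * (1 - (q:ℝ)^((j:ℤ)-(mD:ℤ))) * Pfr q r (K-j)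
            = Prk q mD K j * Pfr q r (K-j)
              * (1 - (q:ℝ)^((j:ℤ)-(mD:ℤ)) * (q:ℝ)^(((K:ℤ)-(j:ℤ)) - (r:ℤ))) := by ring
          _ = _ := by rw [hz]
      calc (∑ i ∈ range (K+1), Prk q mD K (i+1) * (q:ℝ)^(((i:ℤ)+1)-(mD:ℤ)) * Pfr q r (K-i))
            + (∑ i ∈ range (K+1), Prk q mD K i * (1 - (q:ℝ)^((i:ℤ)-(mD:ℤ))) * Pfr q r (K-i))
            + Prk q mD (K+1) 0 * Pfr q r (K+1-0)
          = (∑ j ∈ range (K+1), Prk q mD K j * (q:ℝ)^((j:ℤ)-(mD:ℤ)) * Pfr q r (K+1-j))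
            + ∑ i ∈ range (K+1), Prk q mD K i * (1 - (q:ℝ)^((i:ℤ)-(mD:ℤ))) * Pfr q r (K-i) := by
            rw [← h3, ← h2]; ring
        _ = ∑ j ∈ range (K+1), (Prk q mD K j * (q:ℝ)^((j:ℤ)-(mD:ℤ)) * Pfr q r (K+1-j)
            + Prk q mD K j * (1 - (q:ℝ)^((j:ℤ)-(mD:ℤ))) * Pfr q r (K-j)) := by
            rw [Finset.sum_add_distrib]
        _ = _ := Finset.sum_congr rfl h4
    rw [Pfr_succ, ih, expand, ← Finset.sum_mul]
    congr 1
    push_cast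
    ring_nf


/-- for `q ≥ 2` and `r + m_D ≥ K`,
`P(r+m_D, K) = ∑_{i=max(0,K-r)}^{min(m_D,K)} P_i(m_D,K) · P(r, K-i)`
(the lower bound `max(0, K-r)` is the truncated natural subtraction `K - r`). -/
theorem Pfr_stack_decomposition (q r mD K : ℕ) (hq : 2 ≤ q) (h : K ≤ r + mD) :
    Pfr q (r + mD) K =
      ∑ i ∈ Finset.Icc (K - r) (min mD K), Prk q mD K i * Pfr q r (K - i) := by
  rw [key_sum hq r mD K]
  symm
  apply Finset.sum_subset
  · intro x hx
    rw [Finset.mem_Icc] at hx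
    rw [Finset.mem_range]
    omega
  · intro x hx hx'
    rw [Finset.mem_range] at hx
    rw [Finset.mem_Icc] at hx'
    push_neg at hx'
    by_cases hc : K - r ≤ x
    · have hmD : mD < x := by
        have := hx' hc
        omega
      rw [Prk_zero_of_lt hmD, zero_mul]
    · have hrx : r < K - x := by omega
      rw [Pfr_zero_of_lt hrx, mul_zero]
end

section
/- Let q be a prime power, F_q a finite field with q elements, let K ≥ 1, N_S ≥ K, N_R ≥ 0 be integers and ε_SR, ε_RD ∈ [0,1]. Consider the two-hop (single relay, no direct source–destination link) random experiment: C is a uniformly random N_S×K matrix over F_q; each row of C is received by the relay independently with probability 1−ε_SR, giving the set A ⊆ {1,…,N_S}; independently, G is a uniformly random N_R×|A| matrix over F_q; each of the N_R recoded packets is received by the destination independently with probability 1−ε_RD, giving the set D' ⊆ {1,…,N_R}. Then the probability that the matrix (G)_{D'} · C_A (the rows of G indexed by D' times the rows of C indexed by A) has rank K equals [∑_{m=K}^{N_S} B(m, N_S, ε_SR) P(m, K)] · [∑_{m'=K}^{N_R} B(m', N_R, ε_RD) P(m', K)]. -/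
/-!
A surjective additive map between finite groups pushes the uniform distribution forward to the
uniform distribution. Fix the erasure patterns, with received sets `A` and `D'`; then `C_A` and
`G_{D',A}` are independent uniform matrices. If `C_A` has full column rank `K`, the map
`H ↦ H C_A` is surjective, so `G_{D',A} C_A` is a uniform `|D'| × K` matrix; otherwise the
product has rank `< K`. Counting linearly independent `K`-tuples, a uniform `m × K` matrix has
rank `K` with probability `P(m, K)`, so the conditional success probability is
`P(|A|, K) P(|D'|, K)`. The two erasure patterns are independent with binomial sizes, so
averaging over them factors the probability into the two sums.
-/

open Finset

/-- Binomial probability `B(m,N,ε) = C(N,m) (1-ε)^m ε^{N-m}`. -/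
noncomputable def Bpmf (m N : ℕ) (ε : ℝ) : ℝ :=
  (N.choose m : ℝ) * (1 - ε) ^ m * ε ^ (N - m)

open Function
open scoped BigOperators

theorem Pfr_eq_zero_of_lt {q m K : ℕ} (h : m < K) : Pfr q m K = 0 :=
  prod_eq_zero (mem_range.mpr h) (by rw [sub_self, zpow_zero, sub_self])

theorem Pfr_eq_prod_div (q n K : ℕ) (hq : 0 < q) (hK : K ≤ n) :
    Pfr q n K = ((∏ i : Fin K, (q ^ n - q ^ (i : ℕ)) : ℕ) : ℝ) / (q : ℝ) ^ (n * K) := by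
  rw [Pfr, ← Fin.prod_univ_eq_prod_range, Nat.cast_prod, pow_mul,
    ← Fin.prod_const K ((q : ℝ) ^ n), ← prod_div_distrib]
  refine prod_congr rfl fun i _ => ?_
  have hq' : (q : ℝ) ≠ 0 := by positivity
  rw [Nat.cast_sub (Nat.pow_le_pow_right hq (by omega)), zpow_sub₀ hq']
  simp only [zpow_natCast]
  push_cast
  field_simp

theorem Fintype.expect_comp_of_surjective {X Y G R : Type*} [AddGroup X] [Fintype X]
    [AddMonoid Y] [Fintype Y] [FunLike G X Y] [AddMonoidHomClass G X Y]
    [Semifield R] [CharZero R] (φ : G) (hφ : Surjective φ) (f : Y → R) :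
    𝔼 x, f (φ x) = 𝔼 y, f y := by
  classical
  set c := #{x | φ x = 0}
  have hfiber (y : Y) : #{x | φ x = y} = c :=
    AddMonoidHom.card_fiber_eq_of_mem_range φ (hφ y) ⟨0, map_zero φ⟩
  have hsum : ∑ x, f (φ x) = c * ∑ y, f y := by
    rw [← Finset.sum_fiberwise' univ φ f, mul_sum]
    simp only [sum_const, hfiber, nsmul_eq_mul]
  have hcard : Fintype.card X = Fintype.card Y * c := by
    rw [← card_univ, card_eq_sum_card_fiberwise (f := φ) (t := univ) (fun _ _ => mem_univ _)]
    simp only [hfiber, sum_const, card_univ, smul_eq_mul]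
  have hc : (c : R) ≠ 0 := Nat.cast_ne_zero.mpr (Finset.card_ne_zero.mpr ⟨0, by simp⟩)
  rw [Fintype.expect_eq_sum_div_card, Fintype.expect_eq_sum_div_card, hsum, hcard,
    Nat.cast_mul, mul_comm (Fintype.card Y : R), mul_div_mul_left _ _ hc]

namespace Matrix

variable {l m l' m' α F ι κ σ ρ : Type*}

def submatrixAddMonoidHom [AddZeroClass α] (f : l' → l) (g : m' → m) :
    Matrix l m α →+ Matrix l' m' α where
  toFun M := M.submatrix f g
  map_zero' := rfl
  map_add' _ _ := rfl

theorem submatrix_surjective [Zero α] {f : l' → l} {g : m' → m} (hf : Injective f)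
    (hg : Injective g) : Surjective fun M : Matrix l m α => M.submatrix f g := fun B =>
  ⟨of fun i j => extend f (fun i' => extend g (B i') 0 j) 0 i, by
    ext i j; simp [hf.extend_apply, hg.extend_apply]⟩

theorem mul_right_surjective_of_rank_eq_card_width [Field F] [Fintype m] [Fintype l]
    [DecidableEq l] (M : Matrix m l F) (hM : M.rank = Fintype.card l) :
    Surjective fun H : Matrix l' m F => H * M := by
  have hrange : LinearMap.range Mᵀ.mulVecLin = ⊤ := by
    apply Submodule.eq_top_of_finrank_eq
    rw [← rank, rank_transpose, hM, Module.finrank_fintype_fun_eq_card]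
  have hvecMul : Surjective M.vecMul := fun v => by
    obtain ⟨w, hw⟩ := LinearMap.range_eq_top.mp hrange v
    exact ⟨w, by simpa [mulVec_transpose] using hw⟩
  obtain ⟨L, hL⟩ := vecMul_surjective_iff_exists_left_inverse.mp hvecMul
  exact fun B => ⟨B * L, by simp only [Matrix.mul_assoc, hL, Matrix.mul_one]⟩

variable [Field F] [Fintype F] [Fintype ι] [DecidableEq ι]

theorem card_rank_eq_width (K : ℕ) (hK : K ≤ Fintype.card ι) :
    #{M : Matrix ι (Fin K) F | M.rank = K} =
      ∏ i : Fin K, (Fintype.card F ^ Fintype.card ι - Fintype.card F ^ (i : ℕ)) := by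
  have h := card_linearIndependent (K := F) (V := ι → F) (k := K)
    (by rwa [Module.finrank_fintype_fun_eq_card])
  rw [Module.finrank_fintype_fun_eq_card] at h
  rw [← Fintype.card_subtype, ← Nat.card_eq_fintype_card, ← h]
  refine Nat.card_congr ((transposeAddEquiv ι (Fin K) F).toEquiv.subtypeEquiv fun M => ?_)
  change M.rank = K ↔ LinearIndependent F M.col
  rw [linearIndependent_iff_card_eq_finrank_span, Fintype.card_fin, rank_eq_finrank_span_cols,
    eq_comm, Set.finrank]

theorem expect_ite_rank_eq (K : ℕ) :
    𝔼 M : Matrix ι (Fin K) F, (if M.rank = K then 1 else 0 : ℝ) =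
      Pfr (Fintype.card F) (Fintype.card ι) K := by
  rcases lt_or_ge (Fintype.card ι) K with hlt | hle
  · rw [Pfr_eq_zero_of_lt hlt]
    refine expect_eq_zero fun M _ => if_neg fun h => ?_
    have := M.rank_le_card_height
    omega
  · rw [Fintype.expect_eq_sum_div_card, sum_boole, card_rank_eq_width K hle,
      Pfr_eq_prod_div _ _ _ Fintype.card_pos hle,
      Fintype.card_congr (of : (ι → Fin K → F) ≃ _).symm, Fintype.card_fun, Fintype.card_fun,
      Fintype.card_fin]
    push_cast
    ring

variable [Fintype κ] [DecidableEq κ] [Fintype σ] [DecidableEq σ] [Fintype ρ] [DecidableEq ρ]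
  {fA : ι → σ} {fD : κ → ρ}

theorem expect_ite_rank_submatrix_mul (hA : Injective fA) (hD : Injective fD) {K : ℕ}
    (M : Matrix ι (Fin K) F) :
    𝔼 G : Matrix ρ σ F, (if (G.submatrix fD fA * M).rank = K then 1 else 0 : ℝ) =
      if M.rank = K then Pfr (Fintype.card F) (Fintype.card κ) K else 0 := by
  refine (Fintype.expect_comp_of_surjective (submatrixAddMonoidHom fD fA)
    (submatrix_surjective hD hA)
    fun H : Matrix κ ι F => if (H * M).rank = K then 1 else 0).trans ?_
  split_ifs with hM
  · exact (Fintype.expect_comp_of_surjective (mulRightLinearMap κ F M)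
      (mul_right_surjective_of_rank_eq_card_width M (by rw [hM, Fintype.card_fin]))
      fun B => if B.rank = K then 1 else 0).trans (expect_ite_rank_eq K)
  · refine expect_eq_zero fun H _ => if_neg fun h => hM ?_
    have := rank_mul_le_right H M
    have := M.rank_le_card_width
    rw [Fintype.card_fin] at this
    omega

theorem expect_ite_rank_submatrix_mul_submatrix (hA : Injective fA) (hD : Injective fD)
    (K : ℕ) :
    𝔼 C : Matrix σ (Fin K) F, 𝔼 G : Matrix ρ σ F,
        (if (G.submatrix fD fA * C.submatrix fA id).rank = K then 1 else 0 : ℝ) =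
      Pfr (Fintype.card F) (Fintype.card ι) K * Pfr (Fintype.card F) (Fintype.card κ) K := by
  simp_rw [expect_ite_rank_submatrix_mul hA hD]
  refine (expect_congr rfl fun C _ => (boole_mul _ _).symm).trans ?_
  rw [← expect_mul, ← expect_ite_rank_eq (ι := ι)]
  exact congrArg (· * _) (Fintype.expect_comp_of_surjective (submatrixAddMonoidHom fA id)
    (submatrix_surjective hA injective_id) fun B : Matrix ι (Fin K) F =>
      if B.rank = K then (1 : ℝ) else 0)

end Matrix

theorem sum_prod_ite_mul_card_eq_sum_Bpmf {ι : Type*} [Fintype ι] [DecidableEq ι] (ε : ℝ)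
    (f : ℕ → ℝ) :
    ∑ a : ι → Bool, (∏ i, if a i then 1 - ε else ε) * f (Fintype.card {i // a i = true}) =
      ∑ m ∈ range (Fintype.card ι + 1), Bpmf m (Fintype.card ι) ε * f m := by
  calc _ = ∑ s ∈ (univ : Finset ι).powerset,
        (1 - ε) ^ #s * ε ^ (Fintype.card ι - #s) * f #s := by
        refine sum_nbij' (fun a => ({i | a i} : Finset ι)) (fun s i => decide (i ∈ s))
          (by simp) (by simp) (fun a _ => by funext i; simp) (fun s _ => by ext; simp)
          fun a _ => ?_
        rw [Fintype.card_subtype, prod_ite, prod_const, prod_const, filter_not, card_sdiff,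
          card_univ]
        simp
    _ = _ := by
        refine (sum_powerset_apply_card
          fun k => (1 - ε) ^ k * ε ^ (Fintype.card ι - k) * f k).trans ?_
        rw [card_univ]
        refine sum_congr rfl fun m _ => ?_
        rw [nsmul_eq_mul, Bpmf]
        ring

theorem sum_prod_ite_mul_Pfr_card {ι : Type*} [Fintype ι] [DecidableEq ι] (q K : ℕ)
    (ε : ℝ) :
    ∑ a : ι → Bool, (∏ i, if a i then 1 - ε else ε) *
        Pfr q (Fintype.card {i // a i = true}) K =
      ∑ m ∈ Icc K (Fintype.card ι), Bpmf m (Fintype.card ι) ε * Pfr q m K := by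
  refine (sum_prod_ite_mul_card_eq_sum_Bpmf ε (Pfr q · K)).trans ?_
  refine (sum_subset (fun m hm => ?_) fun m hmN hm => ?_).symm
  · simp only [mem_Icc, mem_range] at hm ⊢
    omega
  · simp only [mem_Icc, mem_range, not_and, not_le] at hmN hm
    rw [Pfr_eq_zero_of_lt (by omega), mul_zero]

theorem sum_filter_inv_card_mul_eq_sum_mul_expect {X A Y D : Type*} [Fintype X] [Fintype A]
    [Fintype Y] [Fintype D] (P : X → A → Y → D → Prop) [∀ x a y d, Decidable (P x a y d)]
    (u : A → ℝ) (v : D → ℝ) :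
    ∑ ω ∈ univ.filter (fun ω : X × A × Y × D => P ω.1 ω.2.1 ω.2.2.1 ω.2.2.2),
        (Fintype.card X : ℝ)⁻¹ * (Fintype.card Y : ℝ)⁻¹ * u ω.2.1 * v ω.2.2.2 =
      ∑ a, ∑ d, u a * v d * 𝔼 x, 𝔼 y, if P x a y d then 1 else 0 := by
  simp only [sum_filter, Fintype.sum_prod_type, Fintype.expect_eq_sum_div_card, sum_div, mul_sum]
  rw [Finset.sum_comm]
  refine sum_congr rfl fun a _ => ?_
  rw [Finset.sum_comm_cycle]
  refine sum_congr rfl fun d _ => sum_congr rfl fun x _ => sum_congr rfl fun y _ => ?_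
  split_ifs <;> ring

theorem two_hop_decoding_prob_general (q : ℕ) (F : Type) [Field F] [Fintype F]
    (hF : Fintype.card F = q) (K NS NR : ℕ)
    (εSR εRD : ℝ) :
    ∑ ω ∈ Finset.univ.filter
        (fun ω : Matrix (Fin NS) (Fin K) F × (Fin NS → Bool) ×
            Matrix (Fin NR) (Fin NS) F × (Fin NR → Bool) =>
          (((ω.2.2.1.submatrix (fun t : {t : Fin NR // ω.2.2.2 t = true} => (t : Fin NR))
                (fun i : {i : Fin NS // ω.2.1 i = true} => (i : Fin NS))) *
              (ω.1.submatrix (fun i : {i : Fin NS // ω.2.1 i = true} => (i : Fin NS)) id)).rank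
            = K)),
      ((Fintype.card (Matrix (Fin NS) (Fin K) F) : ℝ))⁻¹ *
      ((Fintype.card (Matrix (Fin NR) (Fin NS) F) : ℝ))⁻¹ *
      (∏ i : Fin NS, (if ω.2.1 i then (1 - εSR) else εSR)) *
      (∏ t : Fin NR, (if ω.2.2.2 t then (1 - εRD) else εRD)) =
    (∑ m ∈ Finset.Icc K NS, Bpmf m NS εSR * Pfr q m K) *
    (∑ m' ∈ Finset.Icc K NR, Bpmf m' NR εRD * Pfr q m' K) := by
  subst hF
  have hconditional (a : Fin NS → Bool) (d : Fin NR → Bool) :=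
    Matrix.expect_ite_rank_submatrix_mul_submatrix (F := F) (K := K)
      (Subtype.val_injective (p := (a · = true))) (Subtype.val_injective (p := (d · = true)))
  calc _ = ∑ a : Fin NS → Bool, ∑ d : Fin NR → Bool,
        ((∏ i, if a i then 1 - εSR else εSR) *
          Pfr (Fintype.card F) (Fintype.card {i // a i}) K) *
        ((∏ t, if d t then 1 - εRD else εRD) *
          Pfr (Fintype.card F) (Fintype.card {t // d t}) K) := by
        refine (sum_filter_inv_card_mul_eq_sum_mul_expect
          (fun (C : Matrix (Fin NS) (Fin K) F) (a : Fin NS → Bool)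
              (G : Matrix (Fin NR) (Fin NS) F) (d : Fin NR → Bool) =>
            ((G.submatrix (fun t : {t // d t = true} => (t : Fin NR))
              (fun i : {i // a i = true} => (i : Fin NS))) *
              (C.submatrix (fun i : {i // a i = true} => (i : Fin NS)) id)).rank = K)
          (fun a => ∏ i, if a i then 1 - εSR else εSR)
          (fun d => ∏ t, if d t then 1 - εRD else εRD)).trans
          (sum_congr rfl fun a _ => sum_congr rfl fun d _ => ?_)
        rw [hconditional]
        ring
    _ = _ := by
        rw [← sum_mul_sum]
        simp only [sum_prod_ite_mul_Pfr_card, Fintype.card_fin]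

/-- two-hop (single relay, no direct link) experiment. Sample space:
`C` a uniformly random `N_S × K` matrix; `a : Fin N_S → Bool` the relay reception
pattern (each row received independently with probability `1-ε_SR`); `G` a uniformly
random recoding matrix (realised as a uniformly random `N_R × N_S` matrix, of which
only the columns indexed by the received set `A` are used — conditionally on `A`
these columns form a uniformly random `N_R × |A|` matrix); `d : Fin N_R → Bool` the
destination reception pattern (probability `1-ε_RD` each). The probability that
`(G)_{D'} · C_A` has rank `K` equals
`[∑_{m=K}^{N_S} B(m,N_S,ε_SR) P(m,K)] · [∑_{m'=K}^{N_R} B(m',N_R,ε_RD) P(m',K)]`. -/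
theorem two_hop_decoding_prob (q : ℕ) (F : Type) [Field F] [Fintype F] [DecidableEq F]
    (hF : Fintype.card F = q) (K NS NR : ℕ) (hK : 1 ≤ K) (hKS : K ≤ NS)
    (εSR εRD : ℝ) (hSR0 : 0 ≤ εSR) (hSR1 : εSR ≤ 1) (hRD0 : 0 ≤ εRD) (hRD1 : εRD ≤ 1) :
    ∑ ω ∈ Finset.univ.filter
        (fun ω : Matrix (Fin NS) (Fin K) F × (Fin NS → Bool) ×
            Matrix (Fin NR) (Fin NS) F × (Fin NR → Bool) =>
          (((ω.2.2.1.submatrix (fun t : {t : Fin NR // ω.2.2.2 t = true} => (t : Fin NR))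
                (fun i : {i : Fin NS // ω.2.1 i = true} => (i : Fin NS))) *
              (ω.1.submatrix (fun i : {i : Fin NS // ω.2.1 i = true} => (i : Fin NS)) id)).rank
            = K)),
      ((Fintype.card (Matrix (Fin NS) (Fin K) F) : ℝ))⁻¹ *
      ((Fintype.card (Matrix (Fin NR) (Fin NS) F) : ℝ))⁻¹ *
      (∏ i : Fin NS, (if ω.2.1 i then (1 - εSR) else εSR)) *
      (∏ t : Fin NR, (if ω.2.2.2 t then (1 - εRD) else εRD)) =
    (∑ m ∈ Finset.Icc K NS, Bpmf m NS εSR * Pfr q m K) *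
    (∑ m' ∈ Finset.Icc K NR, Bpmf m' NR εRD * Pfr q m' K) :=
  two_hop_decoding_prob_general q F hF K NS NR εSR εRD
end
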